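/- There is no elliptic curve over Q with good reduction at every prime. (Equivalently, there is no abelian scheme of relative dimension 1 over Spec Z.) -/

import Mathlib

/-!
Write `ε = Δ = ±1`, so that `c₆² = c₄³ - 1728 ε`. If `a₁` is even then `c₄ = 16 n` and `c₆ = 8 m`,
and `m² = 64 n³ - 27 ε ≡ 3 or 5 (mod 8)` is not a square. If `a₁` is odd then `c₄ ≡ 1 (mod 8)` and
`c₆² = (c₄ - 12 ε) (c₄² + 12 ε c₄ + 144)`. The second factor is positive, hence so is the first, and
a common prime factor divides `432 = 2⁴ 3³`, so it is `3` because the first factor is odd. Therefore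
`c₄ - 12 ε = 3ᵏ s²`, which is never `≡ 5 (mod 8)`.
-/

theorem Nat.exists_eq_pow_mul_sq_of_mul_eq_sq {p a b c : ℕ} (hp : p.Prime) (ha : a ≠ 0)
    (h : a * b = c ^ 2) (hab : ∀ q, q.Prime → q ∣ a → q ∣ b → q = p) :
    ∃ k s, a = p ^ k * s ^ 2 := by
  have hcop : Nat.Coprime (ordCompl[p] a) (ordCompl[p] b) := by
    refine Nat.coprime_of_dvd fun q hq hqa hqb => ?_
    obtain rfl := hab q hq (hqa.trans (Nat.ordCompl_dvd a _)) (hqb.trans (Nat.ordCompl_dvd b _))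
    exact Nat.not_dvd_ordCompl hp ha hqa
  have hsq : ordCompl[p] a * ordCompl[p] b = (ordCompl[p] c) ^ 2 := by
    rw [← Nat.ordCompl_mul, h, sq, Nat.ordCompl_mul, sq]
  obtain ⟨s, hs⟩ := exists_eq_pow_of_mul_eq_pow (Nat.isUnit_iff.mpr hcop) hsq
  exact ⟨a.factorization p, s, by rw [← hs, Nat.ordProj_mul_ordCompl_eq_self]⟩

theorem Int.sq_emod_eight (s : ℤ) : s ^ 2 % 8 = 0 ∨ s ^ 2 % 8 = 1 ∨ s ^ 2 % 8 = 4 := by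
  have : s % 8 = 0 ∨ s % 8 = 1 ∨ s % 8 = 2 ∨ s % 8 = 3 ∨ s % 8 = 4 ∨ s % 8 = 5 ∨
      s % 8 = 6 ∨ s % 8 = 7 := by omega
  rcases this with h | h | h | h | h | h | h | h <;> simp [sq, Int.mul_emod, h]

theorem Int.three_pow_emod_eight (k : ℕ) : (3 : ℤ) ^ k % 8 = 1 ∨ (3 : ℤ) ^ k % 8 = 3 := by
  induction k with
  | zero => simp
  | succ k ih => rw [pow_succ]; omega

theorem Int.three_pow_mul_sq_emod_eight_ne_five (k : ℕ) (s : ℤ) : 3 ^ k * s ^ 2 % 8 ≠ 5 := by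
  rw [Int.mul_emod]
  rcases Int.three_pow_emod_eight k with h | h <;> rcases Int.sq_emod_eight s with h' | h' | h' <;>
    rw [h, h'] <;> norm_num

theorem Int.emod_eight_ne_five_of_mul_eq_sq {a b c : ℤ} (ha : 0 ≤ a) (hb : 0 ≤ b)
    (h : a * b = c ^ 2) (hab : ∀ q : ℕ, q.Prime → (q : ℤ) ∣ a → (q : ℤ) ∣ b → q = 3) :
    a % 8 ≠ 5 := by
  lift a to ℕ using ha
  lift b to ℕ using hb
  rcases eq_or_ne a 0 with rfl | ha
  · decide
  have h' : a * b = c.natAbs ^ 2 := by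
    rw [← Int.natCast_inj]; push_cast; rwa [sq_abs]
  have hab' : ∀ q, q.Prime → q ∣ a → q ∣ b → q = 3 := fun q hq hqa hqb =>
    hab q hq (Int.natCast_dvd_natCast.mpr hqa) (Int.natCast_dvd_natCast.mpr hqb)
  obtain ⟨k, s, rfl⟩ := Nat.exists_eq_pow_mul_sq_of_mul_eq_sq Nat.prime_three ha h' hab'
  push_cast
  exact Int.three_pow_mul_sq_emod_eight_ne_five k s

theorem Int.sq_ne_cube_sub_of_emod_eight_eq_one {x y ε : ℤ} (hε : ε = 1 ∨ ε = -1)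
    (hx : x % 8 = 1) : y ^ 2 ≠ x ^ 3 - 1728 * ε := by
  intro h
  have hε2 : ε ^ 2 = 1 := by rcases hε with rfl | rfl <;> norm_num
  have hA : (x - 12 * ε) % 8 = 5 := by rcases hε with rfl | rfl <;> omega
  have hB : 0 < x ^ 2 + 12 * ε * x + 144 := by nlinarith [sq_nonneg (x + 6 * ε)]
  have hAB : (x - 12 * ε) * (x ^ 2 + 12 * ε * x + 144) = y ^ 2 := by
    linear_combination -h - 144 * x * hε2
  refine Int.emod_eight_ne_five_of_mul_eq_sq ?_ hB.le hAB ?_ hA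
  · exact nonneg_of_mul_nonneg_left (hAB ▸ sq_nonneg y) hB
  intro q hq hqA hqB
  have hq432 : q ∣ 2 ^ 4 * 3 ^ 3 := by
    have h432 : (2 : ℤ) ^ 4 * 3 ^ 3 =
        x ^ 2 + 12 * ε * x + 144 - (x - 12 * ε) * (x - 12 * ε + 36 * ε) := by
      linear_combination -288 * hε2
    exact_mod_cast h432 ▸ dvd_sub hqB (hqA.mul_right _)
  rcases hq.dvd_mul.mp hq432 with h2 | h3
  · obtain rfl := (Nat.prime_dvd_prime_iff_eq hq Nat.prime_two).mp (hq.dvd_of_dvd_pow h2)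
    omega
  · exact (Nat.prime_dvd_prime_iff_eq hq Nat.prime_three).mp (hq.dvd_of_dvd_pow h3)

theorem Int.sq_ne_sixty_four_mul_cube_sub {ε : ℤ} (hε : ε = 1 ∨ ε = -1) (m n : ℤ) :
    m ^ 2 ≠ 64 * n ^ 3 - 27 * ε := by
  intro h
  rcases hε with rfl | rfl <;> rcases Int.sq_emod_eight m with h' | h' | h' <;> omega

namespace WeierstrassCurve

variable (W : WeierstrassCurve ℤ)

theorem c₄_emod_eight_of_odd_a₁ (h : Odd W.a₁) : W.c₄ % 8 = 1 := by
  obtain ⟨k, hk⟩ := h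
  have : W.c₄ = 8 * (2 * (k ^ 2 + k + W.a₂) ^ 2 + (k ^ 2 + k + W.a₂) - 6 * W.a₄
      - 3 * W.a₃ * (2 * k + 1)) + 1 := by
    simp only [c₄, b₂, b₄, hk]; ring
  omega

theorem sixteen_dvd_c₄_of_even_a₁ (h : Even W.a₁) : 16 ∣ W.c₄ := by
  obtain ⟨k, hk⟩ := h
  exact ⟨(k ^ 2 + W.a₂) ^ 2 - 3 * (W.a₄ + k * W.a₃), by simp only [c₄, b₂, b₄, hk]; ring⟩

theorem eight_dvd_c₆_of_even_a₁ (h : Even W.a₁) : 8 ∣ W.c₆ := by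
  obtain ⟨k, hk⟩ := h
  refine ⟨-8 * (k ^ 2 + W.a₂) ^ 3 + 36 * (k ^ 2 + W.a₂) * (W.a₄ + k * W.a₃)
    - 27 * (W.a₃ ^ 2 + 4 * W.a₆), ?_⟩
  simp only [c₆, b₂, b₄, b₆, hk]; ring

end WeierstrassCurve

/-- There is no elliptic curve over `ℚ` with good reduction at every prime:
no integral Weierstrass model has (minimal) discriminant `±1`, i.e. a unit. -/
theorem no_elliptic_curve_good_reduction_everywhere :
    ∀ W : WeierstrassCurve ℤ, ¬ IsUnit W.Δ := by
  intro W hΔ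
  have hε := Int.isUnit_iff.mp hΔ
  have hc : W.c₆ ^ 2 = W.c₄ ^ 3 - 1728 * W.Δ := by linear_combination W.c_relation
  rcases Int.even_or_odd W.a₁ with ha₁ | ha₁
  · obtain ⟨n, hn⟩ := W.sixteen_dvd_c₄_of_even_a₁ ha₁
    obtain ⟨m, hm⟩ := W.eight_dvd_c₆_of_even_a₁ ha₁
    have h64 : 64 * m ^ 2 = 64 * (64 * n ^ 3 - 27 * W.Δ) := by
      rw [hn, hm] at hc
      linear_combination hc
    exact Int.sq_ne_sixty_four_mul_cube_sub hε m n (mul_left_cancel₀ (by norm_num) h64)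
  · exact Int.sq_ne_cube_sub_of_emod_eight_eq_one hε (W.c₄_emod_eight_of_odd_a₁ ha₁) hc
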